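/- arXiv:1806.09193 — 6 statements merged into one kernel-verified Lean document; each statement's English description precedes it below -/
import Mathlib

section
/- For all j ≥ 0, the central binomial coefficient expression (2j+2)!/((j+1)!·(j+2)!) is bounded above by 4^{j+1} / ((j+2)·√(π(j+1))). -/
/-!
Writing the Catalan number as `centralBinom n / (n + 1)`, it suffices to show
`centralBinom n ^ 2 * π * n ≤ 16 ^ n`. This is Wallis' lower estimate
`(2n+1)/(2n+2) · π/2 ≤ W n` for the partial Wallis product
`W n = 16 ^ n / (centralBinom n ^ 2 * (2n+1))`, together with `4n(n+1) ≤ (2n+1)²`.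
-/

open Nat Real

theorem Nat.centralBinom_mul_factorial_mul_factorial (n : ℕ) :
    centralBinom n * n ! * n ! = (2 * n)! := by
  rw [centralBinom_eq_two_mul_choose, two_mul, ← add_choose_mul_factorial_mul_factorial]

theorem catalan_mul_factorial_mul_factorial_succ (n : ℕ) :
    catalan n * n ! * (n + 1)! = (2 * n)! := by
  rw [← centralBinom_mul_factorial_mul_factorial, ← succ_mul_catalan_eq_centralBinom,
    factorial_succ]
  ring

theorem Real.Wallis.W_eq_sixteen_pow_div_centralBinom_sq (n : ℕ) :
    W n = 16 ^ n / ((centralBinom n : ℝ) ^ 2 * (2 * n + 1)) := by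
  rw [W_eq_factorial_ratio, ← centralBinom_mul_factorial_mul_factorial, pow_mul]
  push_cast
  field_simp
  norm_num

theorem Nat.centralBinom_sq_mul_pi_mul_le (n : ℕ) :
    (centralBinom n : ℝ) ^ 2 * (π * n) ≤ 16 ^ n := by
  have hpos := centralBinom_pos n
  have hW := Real.Wallis.le_W n
  rw [Real.Wallis.W_eq_sixteen_pow_div_centralBinom_sq, le_div_iff₀ (by positivity)] at hW
  have hwallis : (centralBinom n : ℝ) ^ 2 * π * (2 * n + 1) ^ 2 ≤ 4 * (n + 1) * 16 ^ n := by
    field_simp at hW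
    linarith
  nlinarith [pi_pos]

theorem Nat.centralBinom_le_four_pow_div_sqrt {n : ℕ} (hn : n ≠ 0) :
    (centralBinom n : ℝ) ≤ 4 ^ n / √(π * n) := by
  rw [le_div_iff₀ (by positivity)]
  calc (centralBinom n : ℝ) * √(π * n) = √((centralBinom n : ℝ) ^ 2 * (π * n)) := by
        rw [Real.sqrt_mul (by positivity) (π * n), Real.sqrt_sq (by positivity)]
    _ ≤ √(16 ^ n) := Real.sqrt_le_sqrt (centralBinom_sq_mul_pi_mul_le n)
    _ = 4 ^ n := by
        rw [show (16 : ℝ) ^ n = (4 ^ n) ^ 2 by rw [← pow_mul, mul_comm, pow_mul]; norm_num,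
          Real.sqrt_sq (by positivity)]

theorem cast_catalan_le_four_pow_div {n : ℕ} (hn : n ≠ 0) :
    (catalan n : ℝ) ≤ 4 ^ n / ((n + 1) * √(π * n)) := by
  have h := congrArg (Nat.cast (R := ℝ)) (succ_mul_catalan_eq_centralBinom n)
  push_cast at h
  rw [mul_comm, ← div_div, le_div_iff₀ (by positivity), mul_comm, h]
  exact centralBinom_le_four_pow_div_sqrt hn

theorem stmt_1 :
    ∀ j : ℕ,
      (Nat.factorial (2 * j + 2) : ℝ) /
          (Nat.factorial (j + 1) * Nat.factorial (j + 2)) ≤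
        4 ^ (j + 1) / (((j : ℝ) + 2) * Real.sqrt (Real.pi * ((j : ℝ) + 1))) := by
  intro j
  have hbound := cast_catalan_le_four_pow_div (succ_ne_zero j)
  have hfac := catalan_mul_factorial_mul_factorial_succ (j + 1)
  rw [show 2 * (j + 1) = 2 * j + 2 by ring] at hfac
  rw [← hfac]
  push_cast at hbound ⊢
  rw [mul_assoc, mul_div_assoc, div_self (by positivity), mul_one]
  convert hbound using 3
  ring
end

section
/- For every integer n ≥ 1 and every k ∈ {0,1,2}, the series ∑_{p=1, p≠n}^{∞} p^{4-2k}/(p^4 - n^4)^2 converges and its square root is at most n^{1-k}/(2n^2 - 2n + 1). -/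
/-!
Factor `p⁴ - n⁴ = (p - n)(p + n)(p² + n²)` and put `J = |p - n|`, `q = 2n² - 2n + 1`.

For `k = 0, 1` every term is at most `(n^(1-k) / q)² / (2J(J + 1))`: once `√(2(J + 1)/J)` is
bounded by `(3J + 1)/(2J)` (sharp at `J = 1`) this is a polynomial inequality that holds
coefficientwise after shifting the variables by `1`, and the weights `1/(2J(J + 1))` telescope to
`1/2` on each side of `n`.

For `k = 2` the ratio of the series to the bound tends to `π²/12`, so more care is needed: the
terms are `1/(16 n⁶ J²)` up to lower-order corrections; the main parts sum to at most
`ζ(2) = π²/6` on each side, the corrections on the left of `n` give a harmonic sum, which is at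
most `1 + log n ≤ 2 + n/7`, and what is left is a polynomial inequality in `n`.
-/

open Finset Real
open scoped NNReal

lemma sum_range_inv_two_mul_succ_mul_succ_le (m : ℕ) :
    ∑ j ∈ range m, 1 / (2 * ((j : ℝ) + 1) * ((j : ℝ) + 1 + 1)) ≤ 1 / 2 := by
  have h : ∀ j ∈ range m, 1 / (2 * ((j : ℝ) + 1) * ((j : ℝ) + 1 + 1))
      = 1 / (2 * ((j : ℝ) + 1)) - 1 / (2 * (((j + 1 : ℕ) : ℝ) + 1)) := by
    intro j _
    push_cast
    field_simp
    ring
  rw [sum_congr rfl h, sum_range_sub']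
  have : (0 : ℝ) ≤ 1 / (2 * ((m : ℝ) + 1)) := by positivity
  norm_num
  linarith

lemma sum_range_inv_succ_sq_le (m : ℕ) : ∑ j ∈ range m, 1 / ((j : ℝ) + 1) ^ 2 ≤ π ^ 2 / 6 := by
  have h := sum_le_hasSum (range (m + 1)) (fun i _ => by positivity) hasSum_zeta_two
  rw [sum_range_succ'] at h
  simpa using h

/-- The tangent line of `log` at `e² > 7`. -/
lemma log_le_one_add_div_seven {y : ℝ} (hy : 0 ≤ y) : log y ≤ 1 + y / 7 := by
  rcases hy.eq_or_lt with rfl | hy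
  · simp
  have he : 7 ≤ exp 2 := by
    have := exp_one_gt_d9
    rw [show (2 : ℝ) = 1 + 1 by norm_num, exp_add]
    nlinarith
  have h := log_le_sub_one_of_pos (show 0 < y / exp 2 by positivity)
  rw [log_div hy.ne' (exp_pos 2).ne', log_exp] at h
  have : y / exp 2 ≤ y / 7 := div_le_div_of_nonneg_left hy.le (by norm_num) he
  linarith

lemma sum_range_inv_succ_le (m : ℕ) : ∑ j ∈ range m, 1 / ((j : ℝ) + 1) ≤ 2 + m / 7 := by
  have h := harmonic_le_one_add_log m
  have h' := log_le_one_add_div_seven (Nat.cast_nonneg (α := ℝ) m)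
  simp only [harmonic, Rat.cast_sum, Rat.cast_inv, Rat.cast_natCast] at h
  push_cast at h
  simp only [one_div]
  linarith

lemma sum_range_cast_succ (m : ℕ) : ∑ j ∈ range m, ((j : ℝ) + 1) = m * (m + 1) / 2 := by
  induction m with
  | zero => simp
  | succ m ih => rw [sum_range_succ, ih]; push_cast; ring

lemma sum_range_le_of_split {F : ℕ → ℝ} {n : ℕ} {A B : ℝ} (hF : ∀ p, 0 ≤ F p) (h0 : F 0 = 0)
    (hn : F n = 0) (hA : ∑ j ∈ range (n - 1), F (n - (j + 1)) ≤ A)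
    (hB : ∀ m, ∑ j ∈ range m, F (n + (j + 1)) ≤ B) (N : ℕ) :
    ∑ p ∈ range N, F p ≤ A + B := by
  have hleft : ∑ p ∈ range (n + 1), F p ≤ A := by
    rcases n with _ | n
    · simpa [h0] using hA
    rw [sum_range_succ, hn, add_zero, sum_range_succ', h0, add_zero, ← sum_range_reflect]
    refine le_of_eq_of_le (sum_congr rfl fun j hj => ?_) hA
    rw [mem_range] at hj
    congr 1
    omega
  calc ∑ p ∈ range N, F p ≤ ∑ p ∈ range (n + 1 + N), F p :=
        sum_le_sum_of_subset_of_nonneg (range_subset_range.2 (by omega)) fun p _ _ => hF p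
    _ = ∑ p ∈ range (n + 1), F p + ∑ j ∈ range N, F (n + (j + 1)) := by
        rw [sum_range_add]
        simp only [add_assoc, add_comm 1]
    _ ≤ A + B := add_le_add hleft (hB N)

lemma sum_range_le_of_split_telescoping {F : ℕ → ℝ} {n : ℕ} {C : ℝ} (hC : 0 ≤ C)
    (hF : ∀ p, 0 ≤ F p) (h0 : F 0 = 0) (hn : F n = 0)
    (hl : ∀ j < n - 1, F (n - (j + 1)) ≤ C * (1 / (2 * ((j : ℝ) + 1) * ((j : ℝ) + 1 + 1))))
    (hr : ∀ j, F (n + (j + 1)) ≤ C * (1 / (2 * ((j : ℝ) + 1) * ((j : ℝ) + 1 + 1)))) (N : ℕ) :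
    ∑ p ∈ range N, F p ≤ C := by
  have hw : ∀ m, ∑ j ∈ range m, C * (1 / (2 * ((j : ℝ) + 1) * ((j : ℝ) + 1 + 1))) ≤ C / 2 := by
    intro m
    rw [← mul_sum]
    linarith [mul_le_mul_of_nonneg_left (sum_range_inv_two_mul_succ_mul_succ_le m) hC]
  calc ∑ p ∈ range N, F p ≤ C / 2 + C / 2 :=
        sum_range_le_of_split hF h0 hn
          ((sum_le_sum fun j hj => hl j (mem_range.1 hj)).trans (hw _))
          (fun m => (sum_le_sum fun j _ => hr j).trans (hw m)) N
    _ = C := by ring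

lemma sq_div_le_inv_two_mul_mul_succ {a b J : ℝ} (ha : 0 ≤ a) (hb : 0 < b) (hJ : 0 < J)
    (h : a * (3 * J + 1) ≤ 2 * J * b) : (a / (J * b)) ^ 2 ≤ 1 / (2 * J * (J + 1)) := by
  have h1 : a / (J * b) ≤ 2 / (3 * J + 1) := by
    rw [div_le_div_iff₀ (by positivity) (by positivity)]
    linarith
  calc (a / (J * b)) ^ 2 ≤ (2 / (3 * J + 1)) ^ 2 := pow_le_pow_left₀ (by positivity) h1 2
    _ ≤ 1 / (2 * J * (J + 1)) := by
        rw [div_pow, div_le_div_iff₀ (by positivity) (by positivity)]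
        nlinarith [sq_nonneg (J - 1)]

lemma sq_div_pow_four_sub_sq_le_of_lt {x y J : ℝ} (hy : 1 ≤ y) (hJ : 1 ≤ J) (hx : x = y + J) :
    y ^ 2 / (y ^ 4 - x ^ 4) ^ 2
      ≤ 1 / (2 * x ^ 2 - 2 * x + 1) ^ 2 * (1 / (2 * J * (J + 1))) := by
  have hq : 0 < 2 * x ^ 2 - 2 * x + 1 := by nlinarith
  have h1 : 0 < x + y := by linarith
  have h2 : 0 < x ^ 2 + y ^ 2 := by positivity
  have key : y * (2 * x ^ 2 - 2 * x + 1) * (3 * J + 1)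
      ≤ 2 * J * ((x + y) * (x ^ 2 + y ^ 2)) := by
    lift y - 1 to ℝ≥0 using (by linarith) with a ha
    lift J - 1 to ℝ≥0 using (by linarith) with b hb
    obtain rfl : y = 1 + a := by linarith
    obtain rfl : J = 1 + b := by linarith
    subst hx
    rw [← sub_nonneg]; ring_nf; positivity
  have e : y ^ 2 / (y ^ 4 - x ^ 4) ^ 2 = 1 / (2 * x ^ 2 - 2 * x + 1) ^ 2 *
      (y * (2 * x ^ 2 - 2 * x + 1) / (J * ((x + y) * (x ^ 2 + y ^ 2)))) ^ 2 := by
    rw [show y ^ 4 - x ^ 4 = -(J * ((x + y) * (x ^ 2 + y ^ 2))) by subst hx; ring]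
    generalize 2 * x ^ 2 - 2 * x + 1 = Q at hq ⊢
    field_simp [hq.ne', h1.ne', h2.ne', (by linarith : J ≠ 0)]
  rw [e]
  exact mul_le_mul_of_nonneg_left
    (sq_div_le_inv_two_mul_mul_succ (by positivity) (by positivity) (by positivity) key)
    (by positivity)

lemma pow_four_div_pow_four_sub_sq_le_of_gt {x y J : ℝ} (hx : 1 ≤ x) (hJ : 1 ≤ J)
    (hy : y = x + J) :
    y ^ 4 / (y ^ 4 - x ^ 4) ^ 2
      ≤ x ^ 2 / (2 * x ^ 2 - 2 * x + 1) ^ 2 * (1 / (2 * J * (J + 1))) := by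
  have hq : 0 < 2 * x ^ 2 - 2 * x + 1 := by nlinarith
  have h1 : 0 < x + y := by linarith
  have h2 : 0 < x ^ 2 + y ^ 2 := by positivity
  have key : y ^ 2 * (2 * x ^ 2 - 2 * x + 1) * (3 * J + 1)
      ≤ 2 * J * (x * ((x + y) * (x ^ 2 + y ^ 2))) := by
    lift x - 1 to ℝ≥0 using (by linarith) with a ha
    lift J - 1 to ℝ≥0 using (by linarith) with b hb
    obtain rfl : x = 1 + a := by linarith
    obtain rfl : J = 1 + b := by linarith
    subst hy
    rw [← sub_nonneg]; ring_nf; positivity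
  have e : y ^ 4 / (y ^ 4 - x ^ 4) ^ 2 = x ^ 2 / (2 * x ^ 2 - 2 * x + 1) ^ 2 *
      (y ^ 2 * (2 * x ^ 2 - 2 * x + 1) / (J * (x * ((x + y) * (x ^ 2 + y ^ 2))))) ^ 2 := by
    rw [show y ^ 4 - x ^ 4 = J * ((x + y) * (x ^ 2 + y ^ 2)) by subst hy; ring]
    generalize 2 * x ^ 2 - 2 * x + 1 = Q at hq ⊢
    field_simp [hq.ne', h1.ne', h2.ne', (by linarith : J ≠ 0), (by linarith : x ≠ 0)]
  rw [e]
  exact mul_le_mul_of_nonneg_left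
    (sq_div_le_inv_two_mul_mul_succ (by positivity) (by positivity) (by positivity) key)
    (by positivity)

lemma pow_four_div_pow_four_sub_sq_le_of_lt {x y J : ℝ} (hy : 1 ≤ y) (hJ : 1 ≤ J)
    (hx : x = y + J) :
    y ^ 4 / (y ^ 4 - x ^ 4) ^ 2
      ≤ x ^ 2 / (2 * x ^ 2 - 2 * x + 1) ^ 2 * (1 / (2 * J * (J + 1))) := by
  have hyx : y ^ 2 ≤ x ^ 2 := by subst hx; nlinarith
  calc y ^ 4 / (y ^ 4 - x ^ 4) ^ 2 = y ^ 2 * (y ^ 2 / (y ^ 4 - x ^ 4) ^ 2) := by ring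
    _ ≤ x ^ 2 * (y ^ 2 / (y ^ 4 - x ^ 4) ^ 2) := by gcongr
    _ ≤ x ^ 2 * (1 / (2 * x ^ 2 - 2 * x + 1) ^ 2 * (1 / (2 * J * (J + 1)))) := by
        gcongr; exact sq_div_pow_four_sub_sq_le_of_lt hy hJ hx
    _ = _ := by ring

lemma sq_div_pow_four_sub_sq_le_of_gt {x y J : ℝ} (hx : 1 ≤ x) (hJ : 1 ≤ J) (hy : y = x + J) :
    y ^ 2 / (y ^ 4 - x ^ 4) ^ 2
      ≤ 1 / (2 * x ^ 2 - 2 * x + 1) ^ 2 * (1 / (2 * J * (J + 1))) := by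
  have hxy : x ^ 2 ≤ y ^ 2 := by subst hy; nlinarith
  calc y ^ 2 / (y ^ 4 - x ^ 4) ^ 2 = y ^ 4 / (y ^ 4 - x ^ 4) ^ 2 / y ^ 2 := by
        have : y ≠ 0 := by subst hy; positivity
        field_simp
    _ ≤ y ^ 4 / (y ^ 4 - x ^ 4) ^ 2 / x ^ 2 := by gcongr
    _ ≤ x ^ 2 / (2 * x ^ 2 - 2 * x + 1) ^ 2 * (1 / (2 * J * (J + 1))) / x ^ 2 := by
        gcongr; exact pow_four_div_pow_four_sub_sq_le_of_gt hx hJ hy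
    _ = _ := by field_simp

/-- The coefficient `3` of the cross term is sharp as `u / x → 0`; `5` and `8` make the
difference of the two sides of `key` a polynomial in `u` and `y` with nonnegative coefficients. -/
lemma inv_pow_four_sub_sq_le_of_lt {x y u : ℝ} (hy : 0 ≤ y) (hu : 0 < u) (hx : x = y + u) :
    1 / (y ^ 4 - x ^ 4) ^ 2
      ≤ (x ^ 3 * (1 / u ^ 2) + 3 * x ^ 2 * (1 / u) + 5 * x + 8 * u) / (16 * x ^ 9) := by
  have hx0 : 0 < x := by linarith
  have key : 16 * x ^ 9 ≤ (x ^ 3 + 3 * x ^ 2 * u + 5 * x * u ^ 2 + 8 * u ^ 3)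
      * ((x + y) * (x ^ 2 + y ^ 2)) ^ 2 := by
    lift u to ℝ≥0 using hu.le
    lift y to ℝ≥0 using hy
    subst hx
    rw [← sub_nonneg]; ring_nf; positivity
  rw [show y ^ 4 - x ^ 4 = -(u * ((x + y) * (x ^ 2 + y ^ 2))) by subst hx; ring, neg_sq,
    show x ^ 3 * (1 / u ^ 2) + 3 * x ^ 2 * (1 / u) + 5 * x + 8 * u
      = (x ^ 3 + 3 * x ^ 2 * u + 5 * x * u ^ 2 + 8 * u ^ 3) / u ^ 2 by field_simp,
    div_div, div_le_div_iff₀ (by positivity) (by positivity)]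
  nlinarith [mul_le_mul_of_nonneg_left key (sq_nonneg u)]

lemma inv_pow_four_sub_sq_le_of_gt {x y J : ℝ} (hx : 0 < x) (hJ : 1 ≤ J) (hy : y = x + J) :
    1 / (y ^ 4 - x ^ 4) ^ 2 ≤ 1 / (x ^ 2 * (4 * x + 6)) ^ 2 * (1 / J ^ 2) := by
  have h : J * (x ^ 2 * (4 * x + 6)) ≤ y ^ 4 - x ^ 4 := by
    subst hy
    nlinarith [mul_le_mul_of_nonneg_left hJ (by positivity : (0 : ℝ) ≤ 6 * x ^ 2 * J),
      pow_pos hx 3, mul_pos hx (by positivity : (0 : ℝ) < J ^ 3),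
      pow_pos (by linarith : (0 : ℝ) < J) 4]
  calc 1 / (y ^ 4 - x ^ 4) ^ 2 ≤ 1 / (J * (x ^ 2 * (4 * x + 6))) ^ 2 := by gcongr
    _ = _ := by rw [mul_comm J, mul_pow, one_div_mul_one_div]

lemma left_bound_add_right_bound_le (x : ℝ) (hx : 1 ≤ x) :
    (π ^ 2 / 6 * x ^ 3 + 3 * x ^ 2 * (2 + (x - 1) / 7) + 9 * x * (x - 1)) / (16 * x ^ 9)
      + π ^ 2 / 6 / (x ^ 2 * (4 * x + 6)) ^ 2
      ≤ 1 / (x ^ 2 * (2 * x ^ 2 - 2 * x + 1) ^ 2) := by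
  have hζ : π ^ 2 / 6 ≤ 329 / 200 := by nlinarith [pi_lt_d4, pi_pos]
  have hx0 : 0 < x := by linarith
  have hq : 0 < 2 * x ^ 2 - 2 * x + 1 := by nlinarith
  have key : (2 * x ^ 2 - 2 * x + 1) ^ 2 * ((329 / 200 * x ^ 2 + 3 * x * (2 + (x - 1) / 7)
      + 9 * (x - 1)) * (4 * x + 6) ^ 2 + 16 * (329 / 200) * x ^ 4)
      ≤ 16 * x ^ 6 * (4 * x + 6) ^ 2 := by
    obtain ⟨r, hr, rfl⟩ : ∃ r, 0 ≤ r ∧ x = 1 + r := ⟨x - 1, by linarith, by ring⟩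
    nlinarith [pow_nonneg hr 2, pow_nonneg hr 3, pow_nonneg hr 4, pow_nonneg hr 5,
      pow_nonneg hr 6, pow_nonneg hr 7, pow_nonneg hr 8, pow_nonneg hr 9,
      mul_nonneg (pow_nonneg hr 5) (sq_nonneg (r - 4))]
  calc _ ≤ (329 / 200 * x ^ 3 + 3 * x ^ 2 * (2 + (x - 1) / 7) + 9 * x * (x - 1)) / (16 * x ^ 9)
      + 329 / 200 / (x ^ 2 * (4 * x + 6)) ^ 2 := by gcongr
    _ ≤ _ := by
      rw [div_add_div _ _ (by positivity) (by positivity),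
        div_le_div_iff₀ (by positivity) (by positivity)]
      nlinarith [mul_le_mul_of_nonneg_left key (pow_nonneg hx0.le 7)]

noncomputable def summand (n k p : ℕ) : ℝ :=
  if 1 ≤ p ∧ p ≠ n then (p : ℝ) ^ (4 - 2 * k) / ((p : ℝ) ^ 4 - (n : ℝ) ^ 4) ^ 2 else 0

lemma summand_nonneg (n k p : ℕ) : 0 ≤ summand n k p := by
  unfold summand
  split_ifs <;> positivity

lemma summand_at_zero (n k : ℕ) : summand n k 0 = 0 := by
  simp [summand]

lemma summand_self (n k : ℕ) : summand n k n = 0 := by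
  simp [summand]

lemma summand_sub {n j : ℕ} (k : ℕ) (hj : j < n - 1) :
    summand n k (n - (j + 1))
      = ((n : ℝ) - (j + 1)) ^ (4 - 2 * k) / (((n : ℝ) - (j + 1)) ^ 4 - (n : ℝ) ^ 4) ^ 2 := by
  rw [summand, if_pos (by omega), Nat.cast_sub (by omega)]
  push_cast
  rfl

lemma summand_add (n k j : ℕ) :
    summand n k (n + (j + 1))
      = ((n : ℝ) + (j + 1)) ^ (4 - 2 * k) / (((n : ℝ) + (j + 1)) ^ 4 - (n : ℝ) ^ 4) ^ 2 := by
  rw [summand, if_pos (by omega)]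
  push_cast
  rfl

lemma one_le_cast_sub_succ {n j : ℕ} (hj : j < n - 1) : 1 ≤ (n : ℝ) - (j + 1) := by
  have : (j : ℝ) + 2 ≤ n := by exact_mod_cast (by omega : j + 2 ≤ n)
  linarith

lemma sum_range_summand_zero_le {n : ℕ} (hn : 1 ≤ n) (N : ℕ) :
    ∑ p ∈ range N, summand n 0 p ≤ (n : ℝ) ^ 2 / (2 * (n : ℝ) ^ 2 - 2 * n + 1) ^ 2 := by
  refine sum_range_le_of_split_telescoping (by positivity) (summand_nonneg n 0)
    (summand_at_zero n 0) (summand_self n 0) (fun j hj => ?_) (fun j => ?_) N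
  · rw [summand_sub 0 hj]
    exact pow_four_div_pow_four_sub_sq_le_of_lt (one_le_cast_sub_succ hj)
      (le_add_of_nonneg_left j.cast_nonneg) (by ring)
  · rw [summand_add]
    exact pow_four_div_pow_four_sub_sq_le_of_gt (by exact_mod_cast hn)
      (le_add_of_nonneg_left j.cast_nonneg) rfl

lemma sum_range_summand_one_le {n : ℕ} (hn : 1 ≤ n) (N : ℕ) :
    ∑ p ∈ range N, summand n 1 p ≤ 1 / (2 * (n : ℝ) ^ 2 - 2 * n + 1) ^ 2 := by
  refine sum_range_le_of_split_telescoping (by positivity) (summand_nonneg n 1)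
    (summand_at_zero n 1) (summand_self n 1) (fun j hj => ?_) (fun j => ?_) N
  · rw [summand_sub 1 hj]
    exact sq_div_pow_four_sub_sq_le_of_lt (one_le_cast_sub_succ hj)
      (le_add_of_nonneg_left j.cast_nonneg) (by ring)
  · rw [summand_add]
    exact sq_div_pow_four_sub_sq_le_of_gt (by exact_mod_cast hn)
      (le_add_of_nonneg_left j.cast_nonneg) rfl

lemma sum_range_summand_two_le {n : ℕ} (hn : 1 ≤ n) (N : ℕ) :
    ∑ p ∈ range N, summand n 2 p ≤ 1 / ((n : ℝ) ^ 2 * (2 * (n : ℝ) ^ 2 - 2 * n + 1) ^ 2) := by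
  have hx : (1 : ℝ) ≤ n := by exact_mod_cast hn
  have hm : ((n - 1 : ℕ) : ℝ) = n - 1 := by rw [Nat.cast_sub hn, Nat.cast_one]
  refine (sum_range_le_of_split (summand_nonneg n 2) (summand_at_zero n 2) (summand_self n 2) ?_
    (fun m => ?_) N).trans (left_bound_add_right_bound_le n hx)
  · calc ∑ j ∈ range (n - 1), summand n 2 (n - (j + 1))
        ≤ ∑ j ∈ range (n - 1), ((n : ℝ) ^ 3 * (1 / ((j : ℝ) + 1) ^ 2)
            + 3 * (n : ℝ) ^ 2 * (1 / ((j : ℝ) + 1)) + 5 * n + 8 * ((j : ℝ) + 1))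
            / (16 * (n : ℝ) ^ 9) := by
          refine sum_le_sum fun j hj => ?_
          rw [summand_sub 2 (mem_range.1 hj)]
          exact inv_pow_four_sub_sq_le_of_lt (by linarith [one_le_cast_sub_succ (mem_range.1 hj)])
            (by positivity) (by ring)
      _ = ((n : ℝ) ^ 3 * ∑ j ∈ range (n - 1), 1 / ((j : ℝ) + 1) ^ 2
            + 3 * (n : ℝ) ^ 2 * ∑ j ∈ range (n - 1), 1 / ((j : ℝ) + 1) + 5 * n * (n - 1)
            + 8 * ∑ j ∈ range (n - 1), ((j : ℝ) + 1)) / (16 * (n : ℝ) ^ 9) := by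
          rw [← sum_div]
          simp only [sum_add_distrib, ← mul_sum, sum_const, card_range, nsmul_eq_mul, hm]
          ring
      _ ≤ _ := by
          gcongr ?_ / _
          have h1 := sum_range_inv_succ_sq_le (n - 1)
          have h2 := sum_range_inv_succ_le (n - 1)
          rw [sum_range_cast_succ, hm]
          rw [hm] at h2
          nlinarith [mul_le_mul_of_nonneg_left h1 (by positivity : (0 : ℝ) ≤ (n : ℝ) ^ 3),
            mul_le_mul_of_nonneg_left h2 (by positivity : (0 : ℝ) ≤ 3 * (n : ℝ) ^ 2)]
  · calc ∑ j ∈ range m, summand n 2 (n + (j + 1))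
        ≤ ∑ j ∈ range m, 1 / ((n : ℝ) ^ 2 * (4 * n + 6)) ^ 2 * (1 / ((j : ℝ) + 1) ^ 2) := by
          refine sum_le_sum fun j _ => ?_
          rw [summand_add]
          exact inv_pow_four_sub_sq_le_of_gt (by linarith) (le_add_of_nonneg_left j.cast_nonneg) rfl
      _ ≤ _ := by
          rw [← mul_sum, div_eq_mul_one_div (π ^ 2 / 6), mul_comm (π ^ 2 / 6)]
          gcongr
          exact sum_range_inv_succ_sq_le m

lemma sum_range_summand_le {n k : ℕ} (hn : 1 ≤ n) (hk : k ≤ 2) (N : ℕ) :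
    ∑ p ∈ range N, summand n k p
      ≤ ((n : ℝ) ^ ((1 : ℤ) - k) / (2 * (n : ℝ) ^ 2 - 2 * n + 1)) ^ 2 := by
  interval_cases k
  · convert sum_range_summand_zero_le hn N using 1
    simp [div_pow]
  · convert sum_range_summand_one_le hn N using 1
    simp
  · convert sum_range_summand_two_le hn N using 1
    norm_num [div_pow, zpow_neg]
    ring

theorem stmt_2 (n : ℕ) (hn : 1 ≤ n) (k : ℕ) (hk : k ≤ 2) :
    Summable (fun p : ℕ =>
      if 1 ≤ p ∧ p ≠ n then (p : ℝ) ^ (4 - 2 * k) / ((p : ℝ) ^ 4 - (n : ℝ) ^ 4) ^ 2 else 0) ∧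
    Real.sqrt (∑' p : ℕ,
        if 1 ≤ p ∧ p ≠ n then (p : ℝ) ^ (4 - 2 * k) / ((p : ℝ) ^ 4 - (n : ℝ) ^ 4) ^ 2 else 0) ≤
      (n : ℝ) ^ ((1 : ℤ) - (k : ℤ)) / (2 * (n : ℝ) ^ 2 - 2 * (n : ℝ) + 1) := by
  have hq : 0 < 2 * (n : ℝ) ^ 2 - 2 * n + 1 := by nlinarith
  have hbound := sum_range_summand_le hn hk
  have hsum : Summable (summand n k) := summable_of_sum_range_le (summand_nonneg n k) hbound
  refine ⟨hsum, ?_⟩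
  calc Real.sqrt (∑' p, summand n k p)
      ≤ Real.sqrt (((n : ℝ) ^ ((1 : ℤ) - k) / (2 * (n : ℝ) ^ 2 - 2 * n + 1)) ^ 2) :=
        sqrt_le_sqrt (hsum.tsum_le_of_sum_range_le hbound)
    _ = _ := sqrt_sq (by positivity)
end

section
/- If a sequence (u_j) of nonnegative reals with u_0 = 1 satisfies u_{j+1} ≤ M·∑_{s=0}^{j} u_{j-s}·u_s for all j ≥ 0, where M > 0, then u_{j+1} ≤ (4M)^{j+1} · 2·(2j+1)!!/(2j+4)!! for all j ≥ 0, where (2j+1)!! and (2j+4)!! denote the odd and even double factorials. -/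
/-!
By strong induction, `u n ≤ M ^ n * catalan n`: the recursive bound on `u` is dominated termwise
by the Catalan convolution `C (n + 1) = ∑ C (n - s) * C s`. The claimed bound is
`M ^ (j + 1) * C (j + 1)` rewritten with `C (j + 1) = 2 * 4 ^ (j + 1) * (2j+1)‼ / (2j+4)‼`.
-/

open Nat Finset

theorem Nat.catalan_succ_mul_factorial_mul_factorial (n : ℕ) :
    catalan (n + 1) * (n + 2)! * (n + 1)! = (2 * n + 2)! := by
  have h := add_choose_mul_factorial_mul_factorial (n + 1) (n + 1)
  rw [← two_mul, ← centralBinom_eq_two_mul_choose, ← succ_mul_catalan_eq_centralBinom] at h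
  rw [show 2 * (n + 1) = 2 * n + 2 by ring] at h
  rw [factorial_succ (n + 1), ← h]
  ring

theorem Nat.catalan_succ_mul_doubleFactorial (n : ℕ) :
    catalan (n + 1) * (2 * n + 4)‼ = 2 * 4 ^ (n + 1) * (2 * n + 1)‼ := by
  have h4 : (2 * n + 4)‼ = 2 ^ (n + 2) * (n + 2)! := doubleFactorial_two_mul (n + 2)
  have h2 : (2 * n + 2)‼ = 2 ^ (n + 1) * (n + 1)! := doubleFactorial_two_mul (n + 1)
  apply Nat.eq_of_mul_eq_mul_right (factorial_pos (n + 1))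
  calc catalan (n + 1) * (2 * n + 4)‼ * (n + 1)!
      = 2 ^ (n + 2) * (catalan (n + 1) * (n + 2)! * (n + 1)!) := by rw [h4]; ring
    _ = 2 ^ (n + 2) * ((2 * n + 2)‼ * (2 * n + 1)‼) := by
      rw [catalan_succ_mul_factorial_mul_factorial, factorial_eq_mul_doubleFactorial]
    _ = 2 * 4 ^ (n + 1) * (2 * n + 1)‼ * (n + 1)! := by
      rw [h2, show (4 : ℕ) = 2 ^ 2 by rfl, ← pow_mul]; ring

theorem Nat.catalan_succ_eq_sum_range (n : ℕ) :
    catalan (n + 1) = ∑ s ∈ range (n + 1), catalan (n - s) * catalan s := by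
  rw [catalan_succ, ← Fin.sum_univ_eq_sum_range (fun s => catalan (n - s) * catalan s)]
  exact Fintype.sum_congr _ _ fun s => mul_comm _ _

theorem le_pow_mul_catalan_of_le_mul_sum {R : Type*} [CommSemiring R] [PartialOrder R]
    [IsOrderedRing R] {u : ℕ → R} (hu : ∀ n, 0 ≤ u n) (h0 : u 0 ≤ 1) {M : R} (hM : 0 ≤ M)
    (hrec : ∀ n, u (n + 1) ≤ M * ∑ s ∈ range (n + 1), u (n - s) * u s) (n : ℕ) :
    u n ≤ M ^ n * catalan n := by
  induction n using Nat.strong_induction_on with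
  | _ n ih =>
  match n with
  | 0 => simpa using h0
  | n + 1 =>
    have hterm : ∀ s ∈ range (n + 1),
        M * (u (n - s) * u s) ≤ M ^ (n + 1) * (catalan (n - s) * catalan s : ℕ) := by
      intro s hs
      have hs : s ≤ n := Nat.lt_succ_iff.mp (mem_range.mp hs)
      calc M * (u (n - s) * u s)
          ≤ M * ((M ^ (n - s) * catalan (n - s)) * (M ^ s * catalan s)) := by
            have hle := mul_le_mul (ih (n - s) (by omega)) (ih s (by omega)) (hu s)
              (mul_nonneg (pow_nonneg hM _) (Nat.cast_nonneg _))
            exact mul_le_mul_of_nonneg_left hle hM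
        _ = M ^ (n + 1) * (catalan (n - s) * catalan s : ℕ) := by
            rw [_root_.pow_succ', ← pow_sub_mul_pow M hs]; push_cast; ring
    calc u (n + 1) ≤ M * ∑ s ∈ range (n + 1), u (n - s) * u s := hrec n
      _ ≤ M ^ (n + 1) * catalan (n + 1) := by
        rw [mul_sum, catalan_succ_eq_sum_range, Nat.cast_sum, mul_sum]
        exact sum_le_sum hterm

theorem stmt_3 (u : ℕ → ℝ) (hpos : ∀ j, 0 ≤ u j) (h0 : u 0 = 1) (M : ℝ) (hM : 0 < M)
    (hrec : ∀ j : ℕ, u (j + 1) ≤ M * ∑ s ∈ Finset.range (j + 1), u (j - s) * u s) :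
    ∀ j : ℕ, u (j + 1) ≤ (4 * M) ^ (j + 1) * 2 *
      (Nat.doubleFactorial (2 * j + 1) : ℝ) / (Nat.doubleFactorial (2 * j + 4) : ℝ) := by
  intro j
  have hcat : (catalan (j + 1) : ℝ) * (2 * j + 4)‼ = 2 * 4 ^ (j + 1) * (2 * j + 1)‼ := by
    exact_mod_cast catalan_succ_mul_doubleFactorial j
  rw [le_div_iff₀ (by positivity)]
  calc u (j + 1) * (2 * j + 4)‼ ≤ M ^ (j + 1) * catalan (j + 1) * (2 * j + 4)‼ := by
        gcongr
        exact le_pow_mul_catalan_of_le_mul_sum hpos h0.le hM.le hrec (j + 1)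
    _ = (4 * M) ^ (j + 1) * 2 * (2 * j + 1)‼ := by rw [mul_assoc, hcat]; ring
end

section
/- For all j ≥ 0, 2·(2j+1)!!/(2j+4)!! ≤ 1/((j+2)·√(π(j+1))). -/
/-!
Wallis' lower bound `(2k+3)/(2k+4) · π/2 ≤ W (k+1)` for the Wallis product, rewritten with
double factorials, gives `π (k+1) ((2k+1)‼)² ≤ ((2k+2)‼)²`, i.e. `(2k+1)‼/(2k+2)‼ ≤ 1/√(π(k+1))`.
The theorem follows from `(2j+4)‼ = (2j+4) (2j+2)‼`.
-/

open Real Nat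

theorem Real.Wallis.W_succ_eq_doubleFactorial (k : ℕ) :
    Wallis.W (k + 1) = ((2 * k + 2)‼ : ℝ) ^ 2 / (((2 * k + 1)‼ : ℝ) ^ 2 * (2 * k + 3)) := by
  induction k with
  | zero => norm_num [Wallis.W]
  | succ k ih =>
    rw [Wallis.W_succ, ih, show 2 * (k + 1) + 2 = 2 * k + 2 + 2 by ring,
      show 2 * (k + 1) + 1 = 2 * k + 1 + 2 by ring, doubleFactorial_add_two (2 * k + 2),
      doubleFactorial_add_two (2 * k + 1)]
    have : (0 : ℝ) < (2 * k + 1)‼ := mod_cast doubleFactorial_pos _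
    push_cast
    field_simp
    ring

theorem pi_mul_sq_doubleFactorial_le (k : ℕ) :
    π * (k + 1) * ((2 * k + 1)‼ : ℝ) ^ 2 ≤ ((2 * k + 2)‼ : ℝ) ^ 2 := by
  have hW := Wallis.le_W (k + 1)
  rw [Wallis.W_succ_eq_doubleFactorial, le_div_iff₀ (by positivity)] at hW
  push_cast at hW
  have hodd : (0 : ℝ) < (2 * k + 1)‼ := mod_cast doubleFactorial_pos _
  -- `le_W` carries the factor `(2k+3)² / (4(k+2))`, which exceeds `k+1` by `1/(4(k+2))`.
  calc π * (k + 1) * ((2 * k + 1)‼ : ℝ) ^ 2 = π * (2 * k + 1)‼ ^ 2 * (k + 1) := by ring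
    _ ≤ π * (2 * k + 1)‼ ^ 2 * ((2 * k + 3) ^ 2 / (4 * (k + 2))) := by
      gcongr
      rw [le_div_iff₀ (by positivity)]
      nlinarith
    _ = (2 * (k + 1) + 1) / (2 * (k + 1) + 2) * (π / 2) * ((2 * k + 1)‼ ^ 2 * (2 * k + 3)) := by
      field_simp
      ring
    _ ≤ (2 * k + 2)‼ ^ 2 := hW

theorem doubleFactorial_odd_div_even_le (k : ℕ) :
    ((2 * k + 1)‼ : ℝ) / (2 * k + 2)‼ ≤ 1 / √(π * (k + 1)) := by
  have hodd : (0 : ℝ) < (2 * k + 1)‼ := mod_cast doubleFactorial_pos _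
  have heven : (0 : ℝ) < (2 * k + 2)‼ := mod_cast doubleFactorial_pos _
  have hroot : (2 * k + 1)‼ * √(π * (k + 1)) ≤ ((2 * k + 2)‼ : ℝ) := by
    rw [← sqrt_sq hodd.le, ← sqrt_mul (sq_nonneg _), ← sqrt_sq heven.le]
    exact sqrt_le_sqrt (by linarith [pi_mul_sq_doubleFactorial_le k])
  rw [div_le_div_iff₀ heven (by positivity)]
  linarith

theorem stmt_4 :
    ∀ j : ℕ,
      2 * (Nat.doubleFactorial (2 * j + 1) : ℝ) / (Nat.doubleFactorial (2 * j + 4) : ℝ) ≤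
        1 / (((j : ℝ) + 2) * Real.sqrt (Real.pi * ((j : ℝ) + 1))) := by
  intro j
  have hsplit : 2 * ((2 * j + 1)‼ : ℝ) / (2 * j + 4)‼ = ((2 * j + 1)‼ / (2 * j + 2)‼) / (j + 2) := by
    rw [show 2 * j + 4 = 2 * j + 2 + 2 by ring, doubleFactorial_add_two]
    have : (0 : ℝ) < (2 * j + 2)‼ := mod_cast doubleFactorial_pos _
    push_cast
    field_simp
    ring
  rw [hsplit, mul_comm ((j : ℝ) + 2), ← div_div]
  exact div_le_div_of_nonneg_right (doubleFactorial_odd_div_even_le j) (by positivity)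
end

section
/- With u^{(1)} as in the previous context (the first FD-method eigenfunction correction for q_0(x)=x on [0,1]), u^{(1)} satisfies the differential equation (u^{(1)})''''(x) − (nπ)⁴·u^{(1)}(x) = (λ^{(1)} − x)·√2·sin(nπx) for all x ∈ (0,1), where λ^{(1)} = 1/2. -/
/-! Writing `x ^ p cos (k x)` and `x ^ p sin (k x)` as real parts of `x ^ p e^{ikx}`, the operator
`D⁴ - k⁴` acts on `R(x) e^{ikx}` as `e^{ikx} (-6k² R'' - 4ik³ R')` for a polynomial `R`, and it kills
`cosh (k x)` and `sinh (k x)`. So for `u⁽¹⁾` only the polynomial parts of the trigonometric terms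
matter, and with the paper's coefficients the `cos` contributions cancel while the `sin`
contributions add up to `(1/2 - x) √2`. -/

open Real

noncomputable def polyTrigHyp (k a b c d e h f g : ℝ) : ℝ → ℝ := fun x =>
  a * cos (k * x) + b * x * cos (k * x) + c * x ^ 2 * cos (k * x) +
  d * sin (k * x) + e * x * sin (k * x) + h * x ^ 2 * sin (k * x) +
  f * cosh (k * x) + g * sinh (k * x)

theorem hasDerivAt_polyTrigHyp (k a b c d e h f g x : ℝ) :
    HasDerivAt (polyTrigHyp k a b c d e h f g)
      (polyTrigHyp k (b + d * k) (2 * c + e * k) (h * k) (e - a * k) (2 * h - b * k) (-(c * k))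
        (g * k) (f * k) x) x := by
  have hk : HasDerivAt (fun x : ℝ => k * x) k x := by
    simpa using (hasDerivAt_id x).const_mul k
  have hx : HasDerivAt (fun x : ℝ => x) 1 x := hasDerivAt_id x
  have hx2 : HasDerivAt (fun x : ℝ => x ^ 2) (2 * x) x := by
    simpa using hasDerivAt_pow 2 x
  refine (((((((hk.cos.const_mul a).add ((hx.const_mul b).mul hk.cos)).add
    ((hx2.const_mul c).mul hk.cos)).add (hk.sin.const_mul d)).add
    ((hx.const_mul e).mul hk.sin)).add ((hx2.const_mul h).mul hk.sin)).add
    (hk.cosh.const_mul f)).add (hk.sinh.const_mul g) |>.congr_deriv ?_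
  simp only [polyTrigHyp]
  ring

theorem deriv_polyTrigHyp (k a b c d e h f g : ℝ) :
    deriv (polyTrigHyp k a b c d e h f g) =
      polyTrigHyp k (b + d * k) (2 * c + e * k) (h * k) (e - a * k) (2 * h - b * k) (-(c * k))
        (g * k) (f * k) :=
  funext fun x => (hasDerivAt_polyTrigHyp k a b c d e h f g x).deriv

theorem iteratedDeriv_four_sub_polyTrigHyp (k a b c d e h f g x : ℝ) :
    iteratedDeriv 4 (polyTrigHyp k a b c d e h f g) x - k ^ 4 * polyTrigHyp k a b c d e h f g x =
      (-4 * k ^ 3 * (e + 2 * h * x) - 12 * k ^ 2 * c) * cos (k * x) +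
        (4 * k ^ 3 * (b + 2 * c * x) - 12 * k ^ 2 * h) * sin (k * x) := by
  simp only [iteratedDeriv_succ, iteratedDeriv_zero, deriv_polyTrigHyp]
  simp only [polyTrigHyp]
  ring

theorem stmt_17 (n : ℕ) (hn : 1 ≤ n)
    (u : ℝ → ℝ)
    (hu : u = fun x =>
      (Real.sqrt 2 / (4 * ((n : ℝ) * π) ^ 5)) * Real.cos ((n : ℝ) * π * x) +
      (Real.sqrt 2 / (8 * ((n : ℝ) * π) ^ 3)) * x * Real.cos ((n : ℝ) * π * x) +
      (-(Real.sqrt 2) / (8 * ((n : ℝ) * π) ^ 3)) * x ^ 2 * Real.cos ((n : ℝ) * π * x) +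
      (-(3 * Real.sqrt 2) / (16 * ((n : ℝ) * π) ^ 4)) * Real.sin ((n : ℝ) * π * x) +
      (3 * Real.sqrt 2 / (8 * ((n : ℝ) * π) ^ 4)) * x * Real.sin ((n : ℝ) * π * x) +
      (-(Real.sqrt 2) / (4 * ((n : ℝ) * π) ^ 5)) * Real.cosh ((n : ℝ) * π * x) +
      (-(Real.sqrt 2) * (Real.cos ((n : ℝ) * π) - Real.cosh ((n : ℝ) * π)) /
          (4 * ((n : ℝ) * π) ^ 5 * Real.sinh ((n : ℝ) * π))) * Real.sinh ((n : ℝ) * π * x))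
    :
    ∀ x ∈ Set.Ioo (0 : ℝ) 1,
      iteratedDeriv 4 u x - ((n : ℝ) * π) ^ 4 * u x =
        (1 / 2 - x) * Real.sqrt 2 * Real.sin ((n : ℝ) * π * x) := by
  intro x _
  set k : ℝ := (n : ℝ) * π
  have hk : k ≠ 0 := by
    have : (1 : ℝ) ≤ n := by exact_mod_cast hn
    positivity
  set s : ℝ := Real.sqrt 2
  have hu' : u = polyTrigHyp k (s / (4 * k ^ 5)) (s / (8 * k ^ 3)) (-s / (8 * k ^ 3))
      (-(3 * s) / (16 * k ^ 4)) (3 * s / (8 * k ^ 4)) 0 (-s / (4 * k ^ 5))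
      (-s * (cos k - cosh k) / (4 * k ^ 5 * sinh k)) := by
    rw [hu]; funext y; simp only [polyTrigHyp]; ring
  rw [hu', iteratedDeriv_four_sub_polyTrigHyp]
  field_simp
  ring
end

section
/- With u^{(1)} as in the previous context, the orthogonality condition ∫_0^1 u^{(1)}(x)·√2·sin(nπx) dx = 0 holds. -/
/-!
Every product of a term of the ansatz with `sin (k x)` has an elementary antiderivative, so the
integral is an explicit linear combination of the coefficients. At `k = nπ`, where `sin k = 0`
and `cos² k = 1`, the trigonometric part contributes `-(b₁ + b₂)/(4k) + a₀/2 + a₁/4`, which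
vanishes because `b₂ = -b₁` and `a₁ = -2a₀`; the hyperbolic part contributes
`(d₀ (1 - cos k cosh k) - c₀ cos k sinh k)/(2k)`, and `c₀` is chosen exactly to cancel it.
-/

open Real intervalIntegral

section
variable (k x : ℝ)

theorem hasDerivAt_sin_mul : HasDerivAt (fun x => sin (k * x)) (k * cos (k * x)) x := by
  simpa [mul_comm] using ((hasDerivAt_id' x).const_mul k).sin

theorem hasDerivAt_cos_mul : HasDerivAt (fun x => cos (k * x)) (-(k * sin (k * x))) x := by
  simpa [mul_comm] using ((hasDerivAt_id' x).const_mul k).cos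

theorem hasDerivAt_sinh_mul : HasDerivAt (fun x => sinh (k * x)) (k * cosh (k * x)) x := by
  simpa [mul_comm] using ((hasDerivAt_id' x).const_mul k).sinh

theorem hasDerivAt_cosh_mul : HasDerivAt (fun x => cosh (k * x)) (k * sinh (k * x)) x := by
  simpa [mul_comm] using ((hasDerivAt_id' x).const_mul k).cosh

end

section
variable {k : ℝ}

theorem integral_sin_mul_cos_scaled (hk : k ≠ 0) :
    ∫ x in (0 : ℝ)..1, sin (k * x) * cos (k * x) = sin k ^ 2 / (2 * k) := by
  have hF (x : ℝ) : HasDerivAt (fun x => sin (k * x) ^ 2 / (2 * k))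
      (sin (k * x) * cos (k * x)) x :=
    (((hasDerivAt_sin_mul k x).pow 2).div_const (2 * k)).congr_deriv (by field_simp; ring)
  rw [integral_eq_sub_of_hasDerivAt (fun x _ => hF x)
    ((by fun_prop : Continuous _).intervalIntegrable _ _)]
  simp

theorem integral_id_mul_sin_mul_cos_scaled (hk : k ≠ 0) :
    ∫ x in (0 : ℝ)..1, x * (sin (k * x) * cos (k * x)) =
      -1 / (4 * k) + sin k ^ 2 / (2 * k) + sin k * cos k / (4 * k ^ 2) := by
  have hF (x : ℝ) : HasDerivAt
      (fun x => -x / (4 * k) + x * sin (k * x) ^ 2 / (2 * k)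
        + sin (k * x) * cos (k * x) / (4 * k ^ 2))
      (x * (sin (k * x) * cos (k * x))) x := by
    have hs := hasDerivAt_sin_mul k x
    refine ((((hasDerivAt_id' x).neg.div_const (4 * k)).add
      (((hasDerivAt_id' x).mul (hs.pow 2)).div_const (2 * k))).add
      ((hs.mul (hasDerivAt_cos_mul k x)).div_const (4 * k ^ 2))).congr_deriv ?_
    simp only [Pi.pow_apply]
    field_simp
    linear_combination 2 * sin_sq_add_cos_sq (k * x)
  rw [integral_eq_sub_of_hasDerivAt (fun x _ => hF x)
    ((by fun_prop : Continuous _).intervalIntegrable _ _)]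
  simp

theorem integral_sq_mul_sin_mul_cos_scaled (hk : k ≠ 0) :
    ∫ x in (0 : ℝ)..1, x ^ 2 * (sin (k * x) * cos (k * x)) =
      -1 / (4 * k) + sin k ^ 2 / (2 * k) + sin k * cos k / (2 * k ^ 2)
        - sin k ^ 2 / (4 * k ^ 3) := by
  have hF (x : ℝ) : HasDerivAt
      (fun x => -x ^ 2 / (4 * k) + x ^ 2 * sin (k * x) ^ 2 / (2 * k)
        + x * (sin (k * x) * cos (k * x)) / (2 * k ^ 2) - sin (k * x) ^ 2 / (4 * k ^ 3))
      (x ^ 2 * (sin (k * x) * cos (k * x))) x := by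
    have hs := hasDerivAt_sin_mul k x
    have hp := hasDerivAt_pow 2 x
    refine (((((hp.neg.div_const (4 * k)).add ((hp.mul (hs.pow 2)).div_const (2 * k))).add
      (((hasDerivAt_id' x).mul (hs.mul (hasDerivAt_cos_mul k x))).div_const (2 * k ^ 2))).sub
      ((hs.pow 2).div_const (4 * k ^ 3)))).congr_deriv ?_
    simp only [Pi.pow_apply, Pi.mul_apply]
    field_simp
    linear_combination 4 * k * x * sin_sq_add_cos_sq (k * x)
  rw [integral_eq_sub_of_hasDerivAt (fun x _ => hF x)
    ((by fun_prop : Continuous _).intervalIntegrable _ _)]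
  simp

theorem integral_sin_sq_scaled (hk : k ≠ 0) :
    ∫ x in (0 : ℝ)..1, sin (k * x) ^ 2 = 1 / 2 - sin k * cos k / (2 * k) := by
  have hF (x : ℝ) : HasDerivAt (fun x => x / 2 - sin (k * x) * cos (k * x) / (2 * k))
      (sin (k * x) ^ 2) x := by
    refine (((hasDerivAt_id' x).div_const 2).sub
      (((hasDerivAt_sin_mul k x).mul (hasDerivAt_cos_mul k x)).div_const (2 * k))).congr_deriv ?_
    field_simp
    linear_combination -sin_sq_add_cos_sq (k * x)
  rw [integral_eq_sub_of_hasDerivAt (fun x _ => hF x)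
    ((by fun_prop : Continuous _).intervalIntegrable _ _)]
  simp

theorem integral_id_mul_sin_sq_scaled (hk : k ≠ 0) :
    ∫ x in (0 : ℝ)..1, x * sin (k * x) ^ 2 =
      1 / 4 - sin k * cos k / (2 * k) + sin k ^ 2 / (4 * k ^ 2) := by
  have hF (x : ℝ) : HasDerivAt
      (fun x => x ^ 2 / 4 - x * (sin (k * x) * cos (k * x)) / (2 * k)
        + sin (k * x) ^ 2 / (4 * k ^ 2))
      (x * sin (k * x) ^ 2) x := by
    have hs := hasDerivAt_sin_mul k x
    refine ((((hasDerivAt_pow 2 x).div_const 4).sub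
      (((hasDerivAt_id' x).mul (hs.mul (hasDerivAt_cos_mul k x))).div_const (2 * k))).add
      ((hs.pow 2).div_const (4 * k ^ 2))).congr_deriv ?_
    simp only [Pi.mul_apply]
    field_simp
    linear_combination -4 * x * k * sin_sq_add_cos_sq (k * x)
  rw [integral_eq_sub_of_hasDerivAt (fun x _ => hF x)
    ((by fun_prop : Continuous _).intervalIntegrable _ _)]
  simp

theorem integral_cosh_mul_sin_scaled (hk : k ≠ 0) :
    ∫ x in (0 : ℝ)..1, cosh (k * x) * sin (k * x) =
      (sinh k * sin k - cosh k * cos k + 1) / (2 * k) := by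
  have hF (x : ℝ) : HasDerivAt
      (fun x => (sinh (k * x) * sin (k * x) - cosh (k * x) * cos (k * x)) / (2 * k))
      (cosh (k * x) * sin (k * x)) x :=
    ((((hasDerivAt_sinh_mul k x).mul (hasDerivAt_sin_mul k x)).sub
      ((hasDerivAt_cosh_mul k x).mul (hasDerivAt_cos_mul k x))).div_const (2 * k)).congr_deriv
      (by field_simp; ring)
  rw [integral_eq_sub_of_hasDerivAt (fun x _ => hF x)
    ((by fun_prop : Continuous _).intervalIntegrable _ _)]
  simp
  ring

theorem integral_sinh_mul_sin_scaled (hk : k ≠ 0) :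
    ∫ x in (0 : ℝ)..1, sinh (k * x) * sin (k * x) =
      (cosh k * sin k - sinh k * cos k) / (2 * k) := by
  have hF (x : ℝ) : HasDerivAt
      (fun x => (cosh (k * x) * sin (k * x) - sinh (k * x) * cos (k * x)) / (2 * k))
      (sinh (k * x) * sin (k * x)) x :=
    ((((hasDerivAt_cosh_mul k x).mul (hasDerivAt_sin_mul k x)).sub
      ((hasDerivAt_sinh_mul k x).mul (hasDerivAt_cos_mul k x))).div_const (2 * k)).congr_deriv
      (by field_simp; ring)
  rw [integral_eq_sub_of_hasDerivAt (fun x _ => hF x)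
    ((by fun_prop : Continuous _).intervalIntegrable _ _)]
  simp

theorem integral_ansatz_mul_sin (hk : k ≠ 0) (hs : sin k = 0) (b₀ b₁ b₂ a₀ a₁ d₀ c₀ : ℝ) :
    ∫ x in (0 : ℝ)..1,
      (b₀ * cos (k * x) + b₁ * x * cos (k * x) + b₂ * x ^ 2 * cos (k * x) + a₀ * sin (k * x)
        + a₁ * x * sin (k * x) + d₀ * cosh (k * x) + c₀ * sinh (k * x)) * sin (k * x) =
      -(b₁ + b₂) / (4 * k) + a₀ / 2 + a₁ / 4
        + (d₀ * (1 - cos k * cosh k) - c₀ * cos k * sinh k) / (2 * k) := by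
  have h : ∀ x, (b₀ * cos (k * x) + b₁ * x * cos (k * x) + b₂ * x ^ 2 * cos (k * x)
      + a₀ * sin (k * x) + a₁ * x * sin (k * x) + d₀ * cosh (k * x) + c₀ * sinh (k * x))
        * sin (k * x) =
      b₀ * (sin (k * x) * cos (k * x)) + b₁ * (x * (sin (k * x) * cos (k * x)))
        + b₂ * (x ^ 2 * (sin (k * x) * cos (k * x))) + a₀ * sin (k * x) ^ 2
        + a₁ * (x * sin (k * x) ^ 2) + d₀ * (cosh (k * x) * sin (k * x))
        + c₀ * (sinh (k * x) * sin (k * x)) := fun x => by ring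
  simp_rw [h]
  simp (disch := exact (by fun_prop : Continuous _).intervalIntegrable _ _) only
    [integral_add, integral_const_mul]
  rw [integral_sin_mul_cos_scaled hk, integral_id_mul_sin_mul_cos_scaled hk,
    integral_sq_mul_sin_mul_cos_scaled hk, integral_sin_sq_scaled hk,
    integral_id_mul_sin_sq_scaled hk, integral_cosh_mul_sin_scaled hk,
    integral_sinh_mul_sin_scaled hk, hs]
  ring

end

theorem stmt_18 (n : ℕ) (hn : 1 ≤ n)
    (u : ℝ → ℝ)
    (hu : u = fun x =>
      (Real.sqrt 2 / (4 * ((n : ℝ) * π) ^ 5)) * Real.cos ((n : ℝ) * π * x) +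
      (Real.sqrt 2 / (8 * ((n : ℝ) * π) ^ 3)) * x * Real.cos ((n : ℝ) * π * x) +
      (-(Real.sqrt 2) / (8 * ((n : ℝ) * π) ^ 3)) * x ^ 2 * Real.cos ((n : ℝ) * π * x) +
      (-(3 * Real.sqrt 2) / (16 * ((n : ℝ) * π) ^ 4)) * Real.sin ((n : ℝ) * π * x) +
      (3 * Real.sqrt 2 / (8 * ((n : ℝ) * π) ^ 4)) * x * Real.sin ((n : ℝ) * π * x) +
      (-(Real.sqrt 2) / (4 * ((n : ℝ) * π) ^ 5)) * Real.cosh ((n : ℝ) * π * x) +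
      (-(Real.sqrt 2) * (Real.cos ((n : ℝ) * π) - Real.cosh ((n : ℝ) * π)) /
          (4 * ((n : ℝ) * π) ^ 5 * Real.sinh ((n : ℝ) * π))) * Real.sinh ((n : ℝ) * π * x))
    :
    (∫ x in (0 : ℝ)..1, u x * Real.sqrt 2 * Real.sin ((n : ℝ) * π * x)) = 0 := by
  subst hu
  have hk : (n : ℝ) * π ≠ 0 := by positivity
  have hsinh : sinh ((n : ℝ) * π) ≠ 0 := by positivity
  have hcos : cos ((n : ℝ) * π) ^ 2 = 1 := by rw [cos_sq', sin_nat_mul_pi]; norm_num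
  simp_rw [mul_right_comm _ (√2)]
  rw [integral_mul_const, integral_ansatz_mul_sin hk (sin_nat_mul_pi n)]
  refine mul_eq_zero_of_left ?_ _
  field_simp
  linear_combination 128 * √2 * hcos
end
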